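/- arXiv:2104.01336 — 3 statements merged into one kernel-verified Lean document; each statement's English description precedes it below -/
import Mathlib

section
/- Let δ > 0 and P > 0, let ε be a 2×2 real matrix, and set Δ_δ²(ε) = δ + Δ²(ε). Define the fourth-order coefficient tensor a_{ij}^{kl} = (P / (2 Δ_δ(ε))) · ( S_{ij}^{kl} − (1/Δ_δ²(ε)) (Sε)_{ik} (Sε)_{jl} ). Then for every 2×2 real matrix d, the quadratic form satisfies Σ_{i,j,k,l} a_{ij}^{kl} d_{ik} d_{jl} ≥ (P δ / (2 Δ_δ(ε)³)) · Δ²(d). -/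
open Finset Real Matrix

/-- Hibler's quadratic form `Δ²(d)`. -/
noncomputable def Dsq (e : ℝ) (d : Matrix (Fin 2) (Fin 2) ℝ) : ℝ :=
  (d 0 0 + d 1 1)^2 + (1/e^2)*(d 0 0 - d 1 1)^2 + (1/e^2)*(d 0 1 + d 1 0)^2

/-- The 4×4 matrix representing Hibler's map `𝕊`. -/
noncomputable def S4 (e : ℝ) : Matrix (Fin 4) (Fin 4) ℝ :=
  !![1+1/e^2, 0, 0, 1-1/e^2;
     0, 1/e^2, 1/e^2, 0;
     0, 1/e^2, 1/e^2, 0;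
     1-1/e^2, 0, 0, 1+1/e^2]

/-- Identification of a 2×2 matrix with a vector in ℝ⁴. -/
def vec4 (d : Matrix (Fin 2) (Fin 2) ℝ) : Fin 4 → ℝ := ![d 0 0, d 0 1, d 1 0, d 1 1]

/-- Pair index `(i,k) ↦ 2i+k`. -/
def pidx (i k : Fin 2) : Fin 4 := ⟨2*i.1 + k.1, by have := i.2; have := k.2; omega⟩

/-- Hibler's tensor `𝕊_{ij}^{kl}`. -/
noncomputable def Sten (e : ℝ) (i j k l : Fin 2) : ℝ := S4 e (pidx i k) (pidx j l)

/-- The matrix `𝕊ε`. -/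
noncomputable def Smap (e : ℝ) (ε : Matrix (Fin 2) (Fin 2) ℝ) : Matrix (Fin 2) (Fin 2) ℝ :=
  fun i k => ∑ j : Fin 2, ∑ l : Fin 2, Sten e i j k l * ε j l

/-- Regularized `Δ_δ(ε) = √(δ + Δ²(ε))`. -/
noncomputable def Ddel (e δ : ℝ) (ε : Matrix (Fin 2) (Fin 2) ℝ) : ℝ :=
  Real.sqrt (δ + Dsq e ε)

/-- Principal coefficients `a_{ij}^{kl}` of Hibler's operator. -/
noncomputable def aCoef (e δ P : ℝ) (ε : Matrix (Fin 2) (Fin 2) ℝ) (i j k l : Fin 2) : ℝ :=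
  P/(2*Ddel e δ ε) * (Sten e i j k l - (1/(Ddel e δ ε)^2) * Smap e ε i k * Smap e ε j l)

/-!
Writing `⟨ε, d⟩ = ∑ (𝕊ε)_{ik} d_{ik}` for the inner product induced by `𝕊` (so `Δ²(d) = ⟨d, d⟩`),
the quadratic form equals `P / (2Δ_δ) · (Δ²(d) - ⟨ε, d⟩² / Δ_δ²)`. Cauchy–Schwarz for this inner
product gives `⟨ε, d⟩² ≤ Δ²(ε) Δ²(d) = (Δ_δ² - δ) Δ²(d)`, which leaves `P δ / (2Δ_δ³) · Δ²(d)`.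
-/

lemma weighted_cauchy_schwarz_three {a x₁ x₂ x₃ y₁ y₂ y₃ : ℝ} (ha : 0 ≤ a) :
    (x₁ * y₁ + a * x₂ * y₂ + a * x₃ * y₃) ^ 2
      ≤ (x₁ ^ 2 + a * x₂ ^ 2 + a * x₃ ^ 2) * (y₁ ^ 2 + a * y₂ ^ 2 + a * y₃ ^ 2) := by
  nlinarith [mul_nonneg ha (sq_nonneg (x₁ * y₂ - x₂ * y₁)),
    mul_nonneg ha (sq_nonneg (x₁ * y₃ - x₃ * y₁)),
    mul_nonneg (mul_nonneg ha ha) (sq_nonneg (x₂ * y₃ - x₃ * y₂))]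

lemma le_mul_sub_sq_div_sq {P δ t X Y B : ℝ} (hP : 0 ≤ P) (ht : 0 < t) (ht2 : t ^ 2 = δ + X)
    (hB : B ^ 2 ≤ X * Y) :
    P * δ / (2 * t ^ 3) * Y ≤ P / (2 * t) * (Y - B ^ 2 / t ^ 2) := by
  have hsub : δ / t ^ 2 * Y ≤ Y - B ^ 2 / t ^ 2 := by
    rw [← sub_nonneg]
    have hrw : Y - B ^ 2 / t ^ 2 - δ / t ^ 2 * Y = (X * Y - B ^ 2) / t ^ 2 := by
      field_simp
      linear_combination Y * ht2
    rw [hrw]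
    exact div_nonneg (by linarith) (by positivity)
  calc P * δ / (2 * t ^ 3) * Y = P / (2 * t) * (δ / t ^ 2 * Y) := by field_simp
    _ ≤ P / (2 * t) * (Y - B ^ 2 / t ^ 2) := by gcongr

noncomputable def hiblerInner (e : ℝ) (ε d : Matrix (Fin 2) (Fin 2) ℝ) : ℝ :=
  (ε 0 0 + ε 1 1) * (d 0 0 + d 1 1) + (1 / e ^ 2) * (ε 0 0 - ε 1 1) * (d 0 0 - d 1 1)
    + (1 / e ^ 2) * (ε 0 1 + ε 1 0) * (d 0 1 + d 1 0)

lemma hiblerInner_self (e : ℝ) (d : Matrix (Fin 2) (Fin 2) ℝ) : hiblerInner e d d = Dsq e d := by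
  unfold hiblerInner Dsq
  ring

lemma Dsq_nonneg (e : ℝ) (d : Matrix (Fin 2) (Fin 2) ℝ) : 0 ≤ Dsq e d := by
  unfold Dsq
  positivity

lemma hiblerInner_sq_le (e : ℝ) (ε d : Matrix (Fin 2) (Fin 2) ℝ) :
    hiblerInner e ε d ^ 2 ≤ Dsq e ε * Dsq e d :=
  weighted_cauchy_schwarz_three (by positivity)

lemma sum_Sten_mul_mul (e : ℝ) (ε d : Matrix (Fin 2) (Fin 2) ℝ) :
    ∑ i : Fin 2, ∑ j : Fin 2, ∑ k : Fin 2, ∑ l : Fin 2, Sten e i j k l * ε i k * d j l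
      = hiblerInner e ε d := by
  simp only [Sten, S4, pidx, hiblerInner, Fin.sum_univ_two]
  norm_num [show (⟨2, by omega⟩ : Fin 4) = 2 from rfl, show (⟨3, by omega⟩ : Fin 4) = 3 from rfl,
    cons_val_two, cons_val_three]
  ring

lemma sum_Smap_mul (e : ℝ) (ε d : Matrix (Fin 2) (Fin 2) ℝ) :
    ∑ i : Fin 2, ∑ k : Fin 2, Smap e ε i k * d i k = hiblerInner e ε d := by
  simp only [Smap, Sten, S4, pidx, hiblerInner, Fin.sum_univ_two]
  norm_num [show (⟨2, by omega⟩ : Fin 4) = 2 from rfl, show (⟨3, by omega⟩ : Fin 4) = 3 from rfl,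
    cons_val_two, cons_val_three]
  ring

lemma sum_aCoef_mul_mul (e δ P : ℝ) (ε d : Matrix (Fin 2) (Fin 2) ℝ) :
    ∑ i : Fin 2, ∑ j : Fin 2, ∑ k : Fin 2, ∑ l : Fin 2, aCoef e δ P ε i j k l * d i k * d j l
      = P / (2 * Ddel e δ ε) * (Dsq e d - hiblerInner e ε d ^ 2 / Ddel e δ ε ^ 2) := by
  rw [← hiblerInner_self, ← sum_Sten_mul_mul, ← sum_Smap_mul]
  simp only [aCoef, Fin.sum_univ_two]
  ring

theorem hibler_coefficient_coercivity_general (e δ P : ℝ) (hδ : 0 < δ) (hP : 0 < P)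
    (ε d : Matrix (Fin 2) (Fin 2) ℝ) :
    ∑ i : Fin 2, ∑ j : Fin 2, ∑ k : Fin 2, ∑ l : Fin 2,
        aCoef e δ P ε i j k l * d i k * d j l
      ≥ (P * δ / (2 * (Ddel e δ ε)^3)) * Dsq e d := by
  have hpos : 0 < δ + Dsq e ε := add_pos_of_pos_of_nonneg hδ (Dsq_nonneg e ε)
  rw [sum_aCoef_mul_mul]
  exact le_mul_sub_sq_div_sq hP.le (Real.sqrt_pos.2 hpos) (Real.sq_sqrt hpos.le)
    (hiblerInner_sq_le e ε d)

/-- coercivity of the principal coefficients of Hibler's operator: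
Σ a_{ij}^{kl} d_{ik} d_{jl} ≥ (Pδ/(2Δ_δ(ε)³)) Δ²(d). -/
theorem hibler_coefficient_coercivity (e δ P : ℝ) (he : 0 < e) (hδ : 0 < δ) (hP : 0 < P)
    (ε d : Matrix (Fin 2) (Fin 2) ℝ) :
    ∑ i : Fin 2, ∑ j : Fin 2, ∑ k : Fin 2, ∑ l : Fin 2,
        aCoef e δ P ε i j k l * d i k * d j l
      ≥ (P * δ / (2 * (Ddel e δ ε)^3)) * Dsq e d :=
  hibler_coefficient_coercivity_general e δ P hδ hP ε d
end

section
/- For any ξ ∈ ℝ² with |ξ| = 1 and any η ∈ ℂ² with |η| = 1, writing η = x + iy with x, y ∈ ℝ², one has Δ²(ξ ⊗ x) + Δ²(ξ ⊗ y) ≥ 1/e². -/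
open Finset Real Matrix

/-!
The off-trace part of `Δ²(ξ ⊗ x)` is `|ξ|²|x|²/e²`, since
`(ξ₀x₀ - ξ₁x₁)² + (ξ₀x₁ + ξ₁x₀)² = |ξ|²|x|²` is the multiplicativity of the modulus of the complex
numbers `ξ₀ + iξ₁` and `x₀ + ix₁`. Dropping the trace part `(ξ·x)² ≥ 0` and summing over `x` and `y`
leaves `|ξ|²(|x|² + |y|²)/e² = 1/e²`.
-/

theorem Dsq_vecMulVec (e : ℝ) (ξ x : Fin 2 → ℝ) :
    Dsq e (vecMulVec ξ x) = (ξ ⬝ᵥ x) ^ 2 + 1 / e ^ 2 * ((ξ ⬝ᵥ ξ) * (x ⬝ᵥ x)) := by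
  simp only [Dsq, vecMulVec_apply, dotProduct, Fin.sum_univ_two]
  ring

theorem Dsq_vecMulVec_ge (e : ℝ) (ξ x : Fin 2 → ℝ) :
    1 / e ^ 2 * ((ξ ⬝ᵥ ξ) * (x ⬝ᵥ x)) ≤ Dsq e (vecMulVec ξ x) := by
  rw [Dsq_vecMulVec]
  exact le_add_of_nonneg_left (sq_nonneg _)

theorem hibler_rank_one_lower_bound_general (e : ℝ) (ξ x y : Fin 2 → ℝ)
    (hξ : ξ 0^2 + ξ 1^2 = 1) (hη : x 0^2 + x 1^2 + y 0^2 + y 1^2 = 1) :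
    Dsq e (Matrix.of fun i j => ξ i * x j) + Dsq e (Matrix.of fun i j => ξ i * y j)
      ≥ 1/e^2 := by
  have hξξ : ξ ⬝ᵥ ξ = 1 := by simpa [dotProduct, Fin.sum_univ_two, sq] using hξ
  have hxy : x ⬝ᵥ x + y ⬝ᵥ y = 1 := by
    simpa [dotProduct, Fin.sum_univ_two, sq, add_assoc] using hη
  calc 1 / e ^ 2 = 1 / e ^ 2 * ((ξ ⬝ᵥ ξ) * (x ⬝ᵥ x)) + 1 / e ^ 2 * ((ξ ⬝ᵥ ξ) * (y ⬝ᵥ y)) := by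
        rw [hξξ, ← mul_add, one_mul, one_mul, hxy, mul_one]
    _ ≤ Dsq e (vecMulVec ξ x) + Dsq e (vecMulVec ξ y) :=
        add_le_add (Dsq_vecMulVec_ge e ξ x) (Dsq_vecMulVec_ge e ξ y)

/-- for unit ξ ∈ ℝ² and unit η = x + iy ∈ ℂ²,
Δ²(ξ ⊗ x) + Δ²(ξ ⊗ y) ≥ 1/e². -/
theorem hibler_rank_one_lower_bound (e : ℝ) (he : 0 < e) (ξ x y : Fin 2 → ℝ)
    (hξ : ξ 0^2 + ξ 1^2 = 1) (hη : x 0^2 + x 1^2 + y 0^2 + y 1^2 = 1) :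
    Dsq e (Matrix.of fun i j => ξ i * x j) + Dsq e (Matrix.of fun i j => ξ i * y j)
      ≥ 1/e^2 :=
  hibler_rank_one_lower_bound_general e ξ x y hξ hη
end

section
/- Let a_{ij}^{kl} (i,j,k,l ∈ {1,2}) be real coefficients satisfying a_{ij}^{kl} = a_{kj}^{il} = a_{il}^{kj} and the coercivity Σ_{i,j,k,l} a_{ij}^{kl} d_{ik} d_{jl} ≥ c Δ²(d) for all real 2×2 matrices d, with c > 0. Then for every ξ ∈ ℝ², η ∈ ℂ² with |ξ| = |η| = 1, writing η = x + iy: Re Σ_{i,j,k,l} a_{ij}^{kl} (ξ⊗η)_{jl} conj((ξ⊗η))_{ik} = Σ a_{ij}^{kl}(ξ⊗x)_{jl}(ξ⊗x)_{ik} + Σ a_{ij}^{kl}(ξ⊗y)_{jl}(ξ⊗y)_{ik} ≥ c/e². -/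
open Finset Complex

section

variable {ι : Type*} [Fintype ι]

def coeffForm (a : ι → ι → ι → ι → ℝ) (d : Matrix ι ι ℝ) : ℝ :=
  ∑ i, ∑ j, ∑ k, ∑ l, a i j k l * d i k * d j l

theorem coeffForm_vecMulVec (a : ι → ι → ι → ι → ℝ) (ξ z : ι → ℝ) :
    coeffForm a (Matrix.vecMulVec z ξ)
      = ∑ i, ∑ j, ∑ k, ∑ l, a i j k l * (ξ l * z j) * (ξ k * z i) := by
  simp only [coeffForm, Matrix.vecMulVec_apply]
  congr! 4 with i j k l
  ring

theorem re_sum_symbol (a : ι → ι → ι → ι → ℝ) (ξ x y : ι → ℝ) :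
    (∑ i, ∑ j, ∑ k, ∑ l,
        (a i j k l : ℂ) * ((ξ l : ℂ) * (x j + y j * I))
          * (starRingEnd ℂ) ((ξ k : ℂ) * (x i + y i * I))).re
      = (∑ i, ∑ j, ∑ k, ∑ l, a i j k l * (ξ l * x j) * (ξ k * x i))
        + ∑ i, ∑ j, ∑ k, ∑ l, a i j k l * (ξ l * y j) * (ξ k * y i) := by
  simp only [re_sum, ← sum_add_distrib]
  congr! 4 with i j k l
  simp only [mul_re, mul_im, map_mul, map_add, conj_ofReal, conj_I, add_re, add_im, neg_re,
    neg_im, ofReal_re, ofReal_im, I_re, I_im]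
  ring

end

theorem inv_sq_mul_le_Dsq_vecMulVec (e : ℝ) (ξ z : Fin 2 → ℝ) :
    1 / e^2 * ((ξ 0^2 + ξ 1^2) * (z 0^2 + z 1^2)) ≤ Dsq e (Matrix.vecMulVec z ξ) := by
  have h : Dsq e (Matrix.vecMulVec z ξ)
      = (z 0 * ξ 0 + z 1 * ξ 1)^2 + 1 / e^2 * ((ξ 0^2 + ξ 1^2) * (z 0^2 + z 1^2)) := by
    simp only [Dsq, Matrix.vecMulVec_apply]
    ring
  rw [h]
  exact le_add_of_nonneg_left (sq_nonneg _)

theorem hibler_symbol_lower_bound_general (e c : ℝ) (hc : 0 < c)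
    (a : Fin 2 → Fin 2 → Fin 2 → Fin 2 → ℝ)
    (hcoer : ∀ d : Matrix (Fin 2) (Fin 2) ℝ,
      (∑ i : Fin 2, ∑ j : Fin 2, ∑ k : Fin 2, ∑ l : Fin 2, a i j k l * d i k * d j l)
        ≥ c * Dsq e d)
    (ξ x y : Fin 2 → ℝ) (hξ : ξ 0^2 + ξ 1^2 = 1)
    (hη : x 0^2 + x 1^2 + y 0^2 + y 1^2 = 1) :
    (∑ i : Fin 2, ∑ j : Fin 2, ∑ k : Fin 2, ∑ l : Fin 2,
        (a i j k l : ℂ) * ((ξ l : ℂ) * (x j + y j * Complex.I))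
          * (starRingEnd ℂ) ((ξ k : ℂ) * (x i + y i * Complex.I))).re
      = (∑ i : Fin 2, ∑ j : Fin 2, ∑ k : Fin 2, ∑ l : Fin 2,
            a i j k l * (ξ l * x j) * (ξ k * x i))
        + (∑ i : Fin 2, ∑ j : Fin 2, ∑ k : Fin 2, ∑ l : Fin 2,
            a i j k l * (ξ l * y j) * (ξ k * y i)) ∧
    (∑ i : Fin 2, ∑ j : Fin 2, ∑ k : Fin 2, ∑ l : Fin 2,
          a i j k l * (ξ l * x j) * (ξ k * x i))
        + (∑ i : Fin 2, ∑ j : Fin 2, ∑ k : Fin 2, ∑ l : Fin 2,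
            a i j k l * (ξ l * y j) * (ξ k * y i)) ≥ c / e^2 := by
  refine ⟨re_sum_symbol a ξ x y, ?_⟩
  have hx : c * Dsq e (Matrix.vecMulVec x ξ) ≤ coeffForm a (Matrix.vecMulVec x ξ) := hcoer _
  have hy : c * Dsq e (Matrix.vecMulVec y ξ) ≤ coeffForm a (Matrix.vecMulVec y ξ) := hcoer _
  rw [coeffForm_vecMulVec] at hx hy
  have hDx := inv_sq_mul_le_Dsq_vecMulVec e ξ x
  have hDy := inv_sq_mul_le_Dsq_vecMulVec e ξ y
  rw [hξ, one_mul] at hDx hDy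
  have hD : 1 / e^2 ≤ Dsq e (Matrix.vecMulVec x ξ) + Dsq e (Matrix.vecMulVec y ξ) := by
    linear_combination hDx + hDy - 1 / e^2 * hη
  calc c / e^2 = c * (1 / e^2) := by ring
    _ ≤ c * (Dsq e (Matrix.vecMulVec x ξ) + Dsq e (Matrix.vecMulVec y ξ)) := by gcongr
    _ ≤ _ := by linarith

/-- for coefficients with the symmetries a_{ij}^{kl} = a_{kj}^{il} = a_{il}^{kj}
and coercivity Σ a_{ij}^{kl} d_{ik} d_{jl} ≥ c Δ²(d), the symbol form at unit ξ ∈ ℝ² and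
unit η = x + iy ∈ ℂ² splits into real and imaginary parts and is bounded below by c/e². -/
theorem hibler_symbol_lower_bound (e c : ℝ) (he : 0 < e) (hc : 0 < c)
    (a : Fin 2 → Fin 2 → Fin 2 → Fin 2 → ℝ)
    (hsym : ∀ i j k l, a i j k l = a k j i l ∧ a i j k l = a i l k j)
    (hcoer : ∀ d : Matrix (Fin 2) (Fin 2) ℝ,
      (∑ i : Fin 2, ∑ j : Fin 2, ∑ k : Fin 2, ∑ l : Fin 2, a i j k l * d i k * d j l)
        ≥ c * Dsq e d)
    (ξ x y : Fin 2 → ℝ) (hξ : ξ 0^2 + ξ 1^2 = 1)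
    (hη : x 0^2 + x 1^2 + y 0^2 + y 1^2 = 1) :
    (∑ i : Fin 2, ∑ j : Fin 2, ∑ k : Fin 2, ∑ l : Fin 2,
        (a i j k l : ℂ) * ((ξ l : ℂ) * (x j + y j * Complex.I))
          * (starRingEnd ℂ) ((ξ k : ℂ) * (x i + y i * Complex.I))).re
      = (∑ i : Fin 2, ∑ j : Fin 2, ∑ k : Fin 2, ∑ l : Fin 2,
            a i j k l * (ξ l * x j) * (ξ k * x i))
        + (∑ i : Fin 2, ∑ j : Fin 2, ∑ k : Fin 2, ∑ l : Fin 2,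
            a i j k l * (ξ l * y j) * (ξ k * y i)) ∧
    (∑ i : Fin 2, ∑ j : Fin 2, ∑ k : Fin 2, ∑ l : Fin 2,
          a i j k l * (ξ l * x j) * (ξ k * x i))
        + (∑ i : Fin 2, ∑ j : Fin 2, ∑ k : Fin 2, ∑ l : Fin 2,
            a i j k l * (ξ l * y j) * (ξ k * y i)) ≥ c / e^2 :=
  hibler_symbol_lower_bound_general e c hc a hcoer ξ x y hξ hη
end
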